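/- arXiv:2605.11104 — 3 statements merged into one kernel-verified Lean document; each statement's English description precedes it below -/
import Mathlib

section
/- Let q₁, q₂ be coprime positive integers and N a positive integer. Then there exist integers x₁, x₂ and an integer n with 1 ≤ n ≤ N such that x₁q₁ + x₂q₂ = n², |x₂| ≤ H(q₁)·q₁²/N², and |x₁| ≤ N²/q₁ + (q₂/q₁)·|x₂|, where H(q₁) denotes the smallest positive integer h such that every residue class x coprime to q₁ can be written as x ≡ y·z² (mod q₁) with |y| ≤ h and y, z integers. -/
/-!
Write `b` for the inverse of `q₂` modulo `q₁` and `b ≡ y z² (mod q₁)` with `|y| ≤ H(q₁)`.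
Then `y q₂ ≡ c²` with `c = y z q₂` a unit modulo `q₁`. By Dirichlet's approximation theorem
some `1 ≤ k < q₁/N` makes the least absolute residue `n` of `k c` at most `N` in size, and
`n ≠ 0` because `q₁ ∤ k`. Now `n² ≡ k² c² ≡ (y k²) q₂ (mod q₁)`, so `x₂ = y k²` works and
`|x₂| ≤ H(q₁) k² ≤ H(q₁) q₁² / N²`; the bound on `x₁` is read off `x₁ q₁ = n² - x₂ q₂`.
This needs `N < q₁`; otherwise `q₁ · q₁ + 0 · q₂ = q₁²` will do.
-/

/-- `H k` is the smallest positive integer `h` such that every residue class `x` coprime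
to `k` can be written as `x ≡ y·z² (mod k)` with `|y| ≤ h`. -/
noncomputable def Hfun (k : ℕ) : ℕ :=
  sInf {h : ℕ | 0 < h ∧ ∀ x : ℤ, Int.gcd x k = 1 →
    ∃ y z : ℤ, |y| ≤ (h : ℤ) ∧ (x : ZMod k) = (y : ZMod k) * (z : ZMod k) ^ 2}

lemma exists_abs_le_Hfun_mul_sq {k : ℕ} (hk : 0 < k) {x : ℤ} (hx : Int.gcd x k = 1) :
    ∃ y z : ℤ, |y| ≤ (Hfun k : ℤ) ∧ (x : ZMod k) = (y : ZMod k) * (z : ZMod k) ^ 2 := by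
  refine (Nat.sInf_mem ⟨k, hk, fun x _ => ⟨x % k, 1, ?_, by simp⟩⟩ : Hfun k ∈ _).2 x hx
  rw [abs_of_nonneg (Int.emod_nonneg x (by omega))]
  exact (Int.emod_lt_of_pos x (by omega)).le

lemma exists_abs_le_Hfun_mul_eq_sq {q₁ q₂ : ℕ} (hq₁ : 0 < q₁) (hcop : q₁.Coprime q₂) :
    ∃ (y : ℤ) (c : ZMod q₁), |y| ≤ (Hfun q₁ : ℤ) ∧ IsUnit c ∧ (y * q₂ : ZMod q₁) = c ^ 2 := by
  obtain ⟨a, b, hab⟩ : IsCoprime (q₁ : ℤ) q₂ := Nat.isCoprime_iff_coprime.mpr hcop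
  have hb : Int.gcd b q₁ = 1 := Int.isCoprime_iff_gcd_eq_one.mp ⟨q₂, a, by linarith⟩
  have hbq : (b * q₂ : ZMod q₁) = 1 := by
    simpa using congrArg (fun t : ℤ => (t : ZMod q₁)) hab
  obtain ⟨y, z, hy, hyz⟩ := exists_abs_le_Hfun_mul_sq hq₁ hb
  rw [hyz] at hbq
  refine ⟨y, y * z * q₂, hy, IsUnit.of_mul_eq_one (z : ZMod q₁) ?_, ?_⟩
  · linear_combination hbq
  · linear_combination (-(y * q₂ : ZMod q₁)) * hbq

lemma Int.exists_mul_sub_mul_le (c : ℤ) {q M : ℕ} (hq : 0 < q) (hM : 0 < M) :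
    ∃ k j : ℤ, 0 < k ∧ k ≤ M ∧ (M + 1) * |k * c - j * q| ≤ q := by
  obtain ⟨j, k, hk, hkM, hkj⟩ := Real.exists_int_int_abs_mul_sub_le ((c : ℝ) / q) hM
  refine ⟨k, j, hk, hkM, ?_⟩
  have hqR : (0 : ℝ) < q := by exact_mod_cast hq
  have hscale : ((k * c - j * q : ℤ) : ℝ) = (k * ((c : ℝ) / q) - j) * q := by
    push_cast; field_simp
  have : ((M : ℝ) + 1) * |((k * c - j * q : ℤ) : ℝ)| ≤ q := by
    rw [hscale, abs_mul, abs_of_pos hqR]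
    calc _ ≤ ((M : ℝ) + 1) * (1 / ((M : ℝ) + 1) * q) := by gcongr
      _ = q := by field_simp
  exact_mod_cast this

lemma ZMod.exists_small_intCast_eq_mul {q N : ℕ} (hN : 0 < N) (hNq : N < q) {c : ZMod q}
    (hc : IsUnit c) :
    ∃ k n : ℤ, 0 < k ∧ k * N < q ∧ n ≠ 0 ∧ |n| ≤ N ∧ (n : ZMod q) = k * c := by
  have : NeZero q := ⟨by omega⟩
  -- `M = ⌈q / N⌉ - 1` is the largest `M` with `M N < q`, and `q ≤ (M + 1) N`.
  have hM : 0 < (q - 1) / N := Nat.div_pos (by omega) hN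
  have hMN := Nat.div_mul_le_self (q - 1) N
  have hqM := Nat.lt_mul_div_succ (q - 1) hN
  generalize (q - 1) / N = M at hM hMN hqM
  rw [mul_comm] at hqM
  have hMN' : (M * N : ℤ) < q := by exact_mod_cast (by omega : M * N < q)
  have hqM' : (q : ℤ) ≤ (M + 1) * N := by exact_mod_cast (by omega : q ≤ (M + 1) * N)
  obtain ⟨k, j, hk, hkM, hkj⟩ :=
    Int.exists_mul_sub_mul_le (c.val : ℤ) (q := q) (by omega) hM
  have hkN : k * N < q := by
    have : k * N ≤ M * N := mul_le_mul_of_nonneg_right hkM (Int.natCast_nonneg N)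
    omega
  have hcast : ((k * c.val - j * q : ℤ) : ZMod q) = k * c := by simp
  refine ⟨k, k * c.val - j * q, hk, hkN, fun h0 => ?_, ?_, hcast⟩
  · rw [h0, Int.cast_zero, eq_comm, hc.mul_left_eq_zero, ZMod.intCast_zmod_eq_zero_iff_dvd] at hcast
    have := Int.le_of_dvd hk hcast
    nlinarith
  · exact le_of_mul_le_mul_left (hkj.trans hqM') (by positivity)

lemma abs_le_div_add_div_mul_abs {q₁ q₂ x₁ x₂ s B : ℝ} (hq₁ : 0 < q₁) (hq₂ : 0 ≤ q₂)
    (h : x₁ * q₁ + x₂ * q₂ = s) (hs : |s| ≤ B) : |x₁| ≤ B / q₁ + q₂ / q₁ * |x₂| := by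
  rw [div_mul_eq_mul_div, ← add_div, le_div_iff₀ hq₁]
  calc |x₁| * q₁ = |s - x₂ * q₂| := by rw [← h, add_sub_cancel_right, abs_mul, abs_of_pos hq₁]
    _ ≤ |s| + |x₂| * q₂ := (abs_sub _ _).trans_eq (by rw [abs_mul, abs_of_nonneg hq₂])
    _ ≤ B + q₂ * |x₂| := by linarith

theorem small_square_in_progression_general (q₁ q₂ N : ℕ) (hq₁ : 0 < q₁)
    (hN : 0 < N) (hcop : Nat.Coprime q₁ q₂) :
    ∃ x₁ x₂ n : ℤ, 1 ≤ n ∧ n ≤ (N : ℤ) ∧ x₁ * q₁ + x₂ * q₂ = n ^ 2 ∧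
      |(x₂ : ℝ)| ≤ (Hfun q₁ : ℝ) * (q₁ : ℝ) ^ 2 / (N : ℝ) ^ 2 ∧
      |(x₁ : ℝ)| ≤ (N : ℝ) ^ 2 / (q₁ : ℝ) + ((q₂ : ℝ) / (q₁ : ℝ)) * |(x₂ : ℝ)| := by
  have hq₁R : (0 : ℝ) < q₁ := by exact_mod_cast hq₁
  rcases le_or_gt q₁ N with hle | hlt
  · have hle' : (q₁ : ℝ) ≤ N := by exact_mod_cast hle
    refine ⟨q₁, 0, q₁, by exact_mod_cast hq₁, by exact_mod_cast hle, by ring,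
      by rw [Int.cast_zero, abs_zero]; positivity, ?_⟩
    rw [Int.cast_natCast, Nat.abs_cast, Int.cast_zero, abs_zero, mul_zero, add_zero,
      le_div_iff₀ hq₁R]
    nlinarith
  obtain ⟨y, c, hy, hc, hyc⟩ := exists_abs_le_Hfun_mul_eq_sq hq₁ hcop
  obtain ⟨k, n, hk, hkN, hn0, hnN, hnk⟩ := ZMod.exists_small_intCast_eq_mul hN hlt hc
  obtain ⟨x₁, hx₁⟩ : (q₁ : ℤ) ∣ n ^ 2 - y * k ^ 2 * q₂ := by
    rw [← ZMod.intCast_zmod_eq_zero_iff_dvd]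
    push_cast
    linear_combination (n + k * c) * hnk - k ^ 2 * hyc
  have hnN' : |(n : ℝ)| ≤ N := by exact_mod_cast hnN
  have hkN' : (k : ℝ) * N ≤ q₁ := by exact_mod_cast hkN.le
  have hyH : |(y : ℝ)| ≤ Hfun q₁ := by exact_mod_cast hy
  have hsum : x₁ * q₁ + y * k ^ 2 * q₂ = n ^ 2 := by linear_combination -hx₁
  have hsumR : (x₁ : ℝ) * q₁ + (y * k ^ 2 : ℤ) * q₂ = (n : ℝ) ^ 2 := by exact_mod_cast hsum
  refine ⟨x₁, y * k ^ 2, |n|, Int.one_le_abs hn0, hnN, by rw [sq_abs]; exact hsum, ?_,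
    abs_le_div_add_div_mul_abs hq₁R q₂.cast_nonneg hsumR
      (by rw [abs_pow]; exact pow_le_pow_left₀ (abs_nonneg _) hnN' 2)⟩
  rw [le_div_iff₀ (by positivity)]
  push_cast
  calc |(y : ℝ) * (k : ℝ) ^ 2| * (N : ℝ) ^ 2 = |(y : ℝ)| * ((k : ℝ) * N) ^ 2 := by
        rw [abs_mul, abs_sq]; ring
    _ ≤ (Hfun q₁ : ℝ) * (q₁ : ℝ) ^ 2 := by gcongr

/-- Zaharescu's construction of a small square `x₁q₁ + x₂q₂ = n²` with
`|x₂| ≤ H(q₁)·q₁²/N²` and `|x₁| ≤ N²/q₁ + (q₂/q₁)·|x₂|`. -/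
theorem small_square_in_progression (q₁ q₂ N : ℕ) (hq₁ : 0 < q₁) (hq₂ : 0 < q₂)
    (hN : 0 < N) (hcop : Nat.Coprime q₁ q₂) :
    ∃ x₁ x₂ n : ℤ, 1 ≤ n ∧ n ≤ (N : ℤ) ∧ x₁ * q₁ + x₂ * q₂ = n ^ 2 ∧
      |(x₂ : ℝ)| ≤ (Hfun q₁ : ℝ) * (q₁ : ℝ) ^ 2 / (N : ℝ) ^ 2 ∧
      |(x₁ : ℝ)| ≤ (N : ℝ) ^ 2 / (q₁ : ℝ) + ((q₂ : ℝ) / (q₁ : ℝ)) * |(x₂ : ℝ)| :=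
  small_square_in_progression_general q₁ q₂ N hq₁ hN hcop
end

section
/- Let p be a prime with p ≡ 1 (mod 4), and let q be an integer with p ≤ q < 2p such that q is a quadratic non-residue modulo p. Set T = 2p², X₁ = p - 1, and X₂ = n(p) - 1, where n(p) is the least positive quadratic non-residue modulo p. Then the set A = {x₁p + x₂q : x₁, x₂ ∈ ℤ, |x₁| ≤ X₁, |x₂| ≤ X₂} is contained in [-T, T] and contains no non-zero perfect square. -/
set_option maxHeartbeats 1000000


/-- `nres p` is the least positive quadratic non-residue modulo `p`. -/
noncomputable def nres (p : ℕ) [Fact p.Prime] : ℕ :=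
  sInf {m : ℕ | 0 < m ∧ legendreSym p m = -1}

private lemma leg_congr (p : ℕ) [Fact p.Prime] {a b : ℤ} (h : (a : ZMod p) = b) :
    legendreSym p a = legendreSym p b := by
  simp only [legendreSym, h]

private lemma leg_neg (p : ℕ) [Fact p.Prime] (hp4 : p % 4 = 1) (a : ℤ) :
    legendreSym p (-a) = legendreSym p a := by
  have hp2 : p ≠ 2 := by omega
  have : (-a) = (-1) * a := by ring
  rw [this, legendreSym.mul, legendreSym.at_neg_one hp2, ZMod.χ₄_nat_one_mod_four hp4, one_mul]

/-- For `p ≡ 1 (mod 4)` prime and `q ∈ [p, 2p)` a non-residue mod `p`,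
the progression `{x₁p + x₂q : |x₁| ≤ p-1, |x₂| ≤ n(p)-1}` lies in `[-2p², 2p²]`
and contains no non-zero perfect square. -/
theorem lower_bound_construction (p : ℕ) [Fact p.Prime] (hp4 : p % 4 = 1)
    (q : ℤ) (hq1 : (p : ℤ) ≤ q) (hq2 : q < 2 * p) (hqnr : legendreSym p q = -1) :
    ∀ x₁ x₂ : ℤ, |x₁| ≤ (p : ℤ) - 1 → |x₂| ≤ (nres p : ℤ) - 1 →
      |x₁ * p + x₂ * q| ≤ 2 * (p : ℤ) ^ 2 ∧
      ∀ m : ℤ, m ≠ 0 → x₁ * p + x₂ * q ≠ m ^ 2 := by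
  have hpp : p.Prime := Fact.out
  have hp5 : 5 ≤ p := by
    have := hpp.two_le
    omega
  -- q > p
  have hqp : (p : ℤ) < q := by
    rcases lt_or_eq_of_le hq1 with h | h
    · exact h
    · exfalso
      have : legendreSym p q = 0 := by
        rw [legendreSym.eq_zero_iff, ← h]
        exact_mod_cast ZMod.natCast_self p
      omega
  -- the set defining nres is nonempty
  set S : Set ℕ := {m : ℕ | 0 < m ∧ legendreSym p m = -1} with hS
  have hr : ((q - p).toNat) ∈ S := by
    have h1 : ((q - p).toNat : ℤ) = q - p := Int.toNat_of_nonneg (by omega)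
    constructor
    · omega
    · rw [leg_congr p (a := ((q - p).toNat : ℤ)) (b := q) (by
        rw [h1]; push_cast; rw [ZMod.natCast_self]; ring)]
      exact hqnr
  have hmem : nres p ∈ S := Nat.sInf_mem ⟨_, hr⟩
  obtain ⟨hn_pos, hn_leg⟩ := hmem
  have hn_le_r : nres p ≤ (q - p).toNat := Nat.sInf_le hr
  have hn_lt_p : nres p < p := by omega
  -- key: 2 * nres p ≤ p
  have h2n : 2 * nres p ≤ p := by
    have hm : (p - nres p) ∈ S := by
      constructor
      · omega
      · have hcst : ((((p - nres p : ℕ) : ℤ)) : ZMod p) = ((-(nres p : ℤ) : ℤ) : ZMod p) := by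
          push_cast [Nat.cast_sub hn_lt_p.le]
          rw [ZMod.natCast_self]; ring
        rw [leg_congr p hcst, leg_neg p hp4]
        exact hn_leg
    have h1 := Nat.sInf_le hm
    have h2 : sInf S = nres p := rfl
    omega
  intro x₁ x₂ hx₁ hx₂
  rw [abs_le] at hx₁ hx₂
  have hq0 : (0 : ℤ) < q := by
    have : (0 : ℤ) < p := by exact_mod_cast hpp.pos
    linarith
  constructor
  · rw [abs_le]
    constructor <;> nlinarith [hx₁.1, hx₁.2, hx₂.1, hx₂.2,
      (by exact_mod_cast hp5 : (5 : ℤ) ≤ p), (by exact_mod_cast h2n : 2 * (nres p : ℤ) ≤ p)]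
  · intro m hm heq
    have hqz : ((q : ℤ) : ZMod p) ≠ 0 := by
      intro h
      have : legendreSym p q = 0 := (legendreSym.eq_zero_iff p q).mpr h
      omega
    have hcast : ((x₂ : ZMod p)) * (q : ZMod p) = ((m : ZMod p)) ^ 2 := by
      have := congrArg (fun z : ℤ => (z : ZMod p)) heq
      push_cast at this
      rw [ZMod.natCast_self] at this
      push_cast at this ⊢
      linear_combination this
    by_cases hpm : ((m : ℤ) : ZMod p) = 0
    · -- p divides m, force x₂ = 0 and contradiction on size
      have hx2z : (x₂ : ZMod p) = 0 := by
        have : (x₂ : ZMod p) * (q : ZMod p) = 0 := by rw [hcast, hpm]; ring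
        rcases mul_eq_zero.mp this with h | h
        · exact h
        · exact absurd h hqz
      have hdvd : (p : ℤ) ∣ x₂ := by
        rwa [← ZMod.intCast_zmod_eq_zero_iff_dvd]
      have hx2zero : x₂ = 0 := by
        rcases hdvd with ⟨k, hk⟩
        have hnp : (nres p : ℤ) < p := by exact_mod_cast hn_lt_p
        have hk0 : k = 0 := by
          rcases lt_trichotomy k 0 with h | h | h
          · nlinarith [hx₂.1, hx₂.2]
          · exact h
          · nlinarith [hx₂.1, hx₂.2]
        simp [hk, hk0]
      have hdm : (p : ℤ) ∣ m := by
        rwa [← ZMod.intCast_zmod_eq_zero_iff_dvd]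
      rcases hdm with ⟨k, hk⟩
      have hk0 : k ≠ 0 := by rintro rfl; simp at hk; exact hm hk
      have h1 : (p : ℤ) ^ 2 ≤ m ^ 2 := by
        have hk2 : k ^ 2 ≠ 0 := pow_ne_zero 2 hk0
        have hk2' : (0:ℤ) ≤ k ^ 2 := sq_nonneg k
        have : (1 : ℤ) ≤ k ^ 2 := by omega
        calc (p : ℤ) ^ 2 = (p:ℤ)^2 * 1 := by ring
          _ ≤ (p:ℤ)^2 * k^2 := by
              have : (0:ℤ) < (p:ℤ)^2 := by positivity
              nlinarith
          _ = m ^ 2 := by rw [hk]; ring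
      rw [hx2zero] at heq
      have hple : (2 : ℤ) ≤ p := by exact_mod_cast hpp.two_le
      nlinarith [hx₁.1, hx₁.2]
    · -- p does not divide m: Legendre symbol argument
      have hsq : legendreSym p (m ^ 2) = 1 := legendreSym.sq_one' p hpm
      have hleg : legendreSym p (x₂ * q) = 1 := by
        rw [leg_congr p (a := x₂ * q) (b := m ^ 2) (by push_cast; rw [hcast])]
        exact hsq
      rw [legendreSym.mul, hqnr] at hleg
      have hlx2 : legendreSym p x₂ = -1 := by omega
      have hx2ne : x₂ ≠ 0 := by
        rintro rfl
        simp at hlx2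
      have hkS : x₂.natAbs ∈ S := by
        constructor
        · simpa [Int.natAbs_pos] using hx2ne
        · rcases Int.natAbs_eq x₂ with h | h
          · rw [leg_congr p (a := (x₂.natAbs : ℤ)) (b := x₂) (by rw [← h])]
            exact hlx2
          · rw [leg_congr p (a := (x₂.natAbs : ℤ)) (b := -x₂)
              (by rw [show ((x₂.natAbs : ℤ)) = -x₂ by omega]), leg_neg p hp4]
            exact hlx2
      have hinf := Nat.sInf_le hkS
      have h2 : sInf S = nres p := rfl
      rw [h2] at hinf
      have habs : (x₂.natAbs : ℤ) ≤ (nres p : ℤ) - 1 := by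
        rcases Int.natAbs_eq x₂ with h | h <;> omega
      have : (nres p : ℤ) ≤ (x₂.natAbs : ℤ) := by exact_mod_cast hinf
      omega
end

section
/- Let q₁, q₂ be coprime positive integers with q₁ ≤ q₂, and suppose that the progression A = {x₁q₁ + x₂q₂ : |x₁| ≤ X₁, |x₂| ≤ X₂} ⊆ [-T, T] contains no non-zero perfect square, with 1 ≤ X₁ and 1 ≤ X₂. Assume the Zaharescu-type bound H(q₁) ≤ C_ε·q₁^(1/4+ε) (where H is as defined below). Then |A| ≤ C'_ε · q₁^(1/8+ε) · T / q₂^(1/2). -/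
theorem exists_pow_mul_le_lt {k c : ℕ} (hk : k ≠ 0) (hc : 0 < c) (m : ℕ) :
    ∃ M : ℕ, M ^ k * c ≤ m ∧ m < (M + 1) ^ k * c := by
  classical
  have hex : ∃ M : ℕ, m < (M + 1) ^ k * c :=
    ⟨m, (Nat.lt_succ_self m).trans_le
      ((Nat.le_self_pow hk _).trans (Nat.le_mul_of_pos_right _ hc))⟩
  refine ⟨Nat.find hex, ?_, Nat.find_spec hex⟩
  rcases h : Nat.find hex with _ | M
  · simp [zero_pow hk]
  · exact not_lt.1 (Nat.find_min hex (h ▸ Nat.lt_succ_self M))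

theorem sq_sub_le_four_mul_of_sq_le {R : Type*} [CommRing R] [LinearOrder R] [IsStrictOrderedRing R]
    {a b x d : R} (ha : 0 ≤ a) (hx : |x| ≤ b) (had : a ^ 2 ≤ d) (hbd : b ^ 2 ≤ d) :
    (a - x) ^ 2 ≤ 4 * d := by
  obtain ⟨hx₁, hx₂⟩ := abs_le.1 hx
  nlinarith [sq_nonneg (a - b)]

theorem exists_ne_zero_intCast_eq_mul_of_isUnit {q : ℕ} {w : ℤ} (hw : IsUnit (w : ZMod q))
    {M : ℕ} (hM : 0 < M) (hMq : M < q) :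
    ∃ j r : ℤ, 0 < j ∧ j ≤ M ∧ r ≠ 0 ∧ (r : ZMod q) = j * w ∧ (M + 1) * |r| ≤ q := by
  obtain ⟨a, j, hj, hjM, happrox⟩ := Real.exists_int_int_abs_mul_sub_le ((w : ℝ) / q) hM
  have hq : (0 : ℝ) < q := by exact_mod_cast hM.trans hMq
  refine ⟨j, j * w - a * q, hj, hjM, ?_, by simp, ?_⟩
  · intro hr
    have hjw : (j : ZMod q) * w = 0 := by
      simpa using congrArg (fun r : ℤ => (r : ZMod q)) hr
    have hdvd : (q : ℤ) ∣ j := (ZMod.intCast_zmod_eq_zero_iff_dvd j q).1 (hw.mul_left_eq_zero.1 hjw)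
    have := Int.le_of_dvd hj hdvd
    omega
  · have hr : ((j * w - a * q : ℤ) : ℝ) = (j * ((w : ℝ) / q) - a) * q := by
      push_cast; field_simp
    have hrq : ((M : ℝ) + 1) * |((j * w - a * q : ℤ) : ℝ)| ≤ q := by
      rw [hr, abs_mul, abs_of_pos hq, ← mul_assoc]
      calc ((M : ℝ) + 1) * |j * ((w : ℝ) / q) - a| * q ≤ 1 * q := by
            gcongr
            rwa [← le_div_iff₀' (by positivity)]
        _ = q := one_mul _
    exact_mod_cast hrq

theorem Hfun_spec {k : ℕ} (hk : 0 < k) :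
    0 < Hfun k ∧ ∀ x : ℤ, Int.gcd x k = 1 →
      ∃ y z : ℤ, |y| ≤ (Hfun k : ℤ) ∧ (x : ZMod k) = (y : ZMod k) * (z : ZMod k) ^ 2 := by
  apply Nat.sInf_mem (s := {h : ℕ | 0 < h ∧ ∀ x : ℤ, Int.gcd x k = 1 →
    ∃ y z : ℤ, |y| ≤ (h : ℤ) ∧ (x : ZMod k) = (y : ZMod k) * (z : ZMod k) ^ 2})
  refine ⟨k, hk, fun x _ => ⟨x % k, 1, ?_, by simp [ZMod.intCast_mod]⟩⟩
  have hk' : (0 : ℤ) < k := by exact_mod_cast hk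
  rw [abs_of_nonneg (Int.emod_nonneg x hk'.ne')]
  exact (Int.emod_lt_of_pos x hk').le

theorem exists_unit_sq_eq_mul_of_coprime {q₁ q₂ : ℕ} (hq₁ : 0 < q₁) (hcop : q₁.Coprime q₂) :
    ∃ y w : ℤ, |y| ≤ (Hfun q₁ : ℤ) ∧ IsUnit (w : ZMod q₁) ∧
      ((y * q₂ : ℤ) : ZMod q₁) = (w : ZMod q₁) ^ 2 := by
  obtain ⟨y, z, hy, hyz⟩ := (Hfun_spec hq₁).2 q₂ (by simpa using hcop.symm)
  rw [Int.cast_natCast] at hyz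
  have hunit : IsUnit ((y : ZMod q₁) * z * z) := by
    rw [mul_assoc, ← sq, ← hyz]
    simpa using (ZMod.isUnit_iff_coprime q₂ q₁).2 hcop.symm
  refine ⟨y, y * z, hy, by exact_mod_cast isUnit_of_mul_isUnit_left hunit, ?_⟩
  push_cast
  rw [hyz]
  ring

theorem exists_sq_sub_mul_dvd_of_lt {q₁ q₂ : ℕ} (hcop : q₁.Coprime q₂) {M : ℕ} (hM : 0 < M)
    (hMq : M < q₁) :
    ∃ x₂ n : ℤ, n ≠ 0 ∧ (q₁ : ℤ) ∣ n ^ 2 - x₂ * q₂ ∧ |x₂| ≤ Hfun q₁ * M ^ 2 ∧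
      (M + 1) ^ 2 * n ^ 2 ≤ q₁ ^ 2 := by
  obtain ⟨y, w, hy, hw, hyw⟩ := exists_unit_sq_eq_mul_of_coprime (hM.trans hMq) hcop
  obtain ⟨j, r, hj, hjM, hr, hrw, hrq⟩ := exists_ne_zero_intCast_eq_mul_of_isUnit hw hM hMq
  refine ⟨y * j ^ 2, r, hr, ?_, ?_, ?_⟩
  · rw [← ZMod.intCast_zmod_eq_zero_iff_dvd]
    push_cast at hyw ⊢
    rw [hrw]
    linear_combination (j : ZMod q₁) ^ 2 * hyw.symm
  · rw [abs_mul, abs_of_nonneg (sq_nonneg j)]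
    have : (j : ℤ) ^ 2 ≤ (M : ℤ) ^ 2 := pow_le_pow_left₀ hj.le hjM 2
    exact mul_le_mul hy this (sq_nonneg j) (by positivity)
  · rw [← sq_abs r, ← mul_pow]
    exact pow_le_pow_left₀ (by positivity) hrq 2

theorem exists_sq_eq_mul_add_mul_of_pow_mul_le_lt {q₁ q₂ : ℕ} (hcop : q₁.Coprime q₂) {M : ℕ}
    (hM : 0 < M) (hMq : M < q₁) (hlow : (M : ℤ) ^ 4 * (Hfun q₁ * q₂) ≤ q₁ ^ 2)
    (hhigh : (q₁ : ℤ) ^ 2 < (M + 1) ^ 4 * (Hfun q₁ * q₂)) :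
    ∃ x₁ x₂ n : ℤ, n ≠ 0 ∧ x₁ * q₁ + x₂ * q₂ = n ^ 2 ∧
      x₁ ^ 2 ≤ 4 * Hfun q₁ * q₂ ∧ x₂ ^ 2 * q₂ ≤ Hfun q₁ * q₁ ^ 2 := by
  obtain ⟨x₂, n, hn, ⟨x₁, hx₁⟩, hx₂, hnq⟩ := exists_sq_sub_mul_dvd_of_lt hcop hM hMq
  refine ⟨x₁, x₂, n, hn, by linarith, ?_, ?_⟩
  · have hA : (n ^ 2) ^ 2 ≤ q₁ ^ 2 * (Hfun q₁ * q₂) := by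
      refine le_of_mul_le_mul_left ?_ (by positivity : (0 : ℤ) < (M + 1) ^ 4)
      calc ((M : ℤ) + 1) ^ 4 * (n ^ 2) ^ 2 = ((M + 1) ^ 2 * n ^ 2) ^ 2 := by ring
        _ ≤ ((q₁ : ℤ) ^ 2) ^ 2 := pow_le_pow_left₀ (by positivity) hnq 2
        _ = q₁ ^ 2 * q₁ ^ 2 := by ring
        _ ≤ q₁ ^ 2 * ((M + 1) ^ 4 * (Hfun q₁ * q₂)) :=
            mul_le_mul_of_nonneg_left hhigh.le (by positivity)
        _ = (M + 1) ^ 4 * (q₁ ^ 2 * (Hfun q₁ * q₂)) := by ring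
    have hB : (Hfun q₁ * M ^ 2 * q₂ : ℤ) ^ 2 ≤ q₁ ^ 2 * (Hfun q₁ * q₂) := by
      calc (Hfun q₁ * M ^ 2 * q₂ : ℤ) ^ 2 = (Hfun q₁ * q₂ : ℤ) * (M ^ 4 * (Hfun q₁ * q₂)) := by ring
        _ ≤ (Hfun q₁ * q₂ : ℤ) * q₁ ^ 2 := mul_le_mul_of_nonneg_left hlow (by positivity)
        _ = (q₁ ^ 2 * (Hfun q₁ * q₂) : ℤ) := mul_comm _ _
    have hx₂q : |x₂ * q₂| ≤ Hfun q₁ * M ^ 2 * q₂ := by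
      rw [abs_mul, Nat.abs_cast]
      exact mul_le_mul_of_nonneg_right hx₂ (by positivity)
    refine le_of_mul_le_mul_left ?_ (by have := hM.trans hMq; positivity : (0 : ℤ) < q₁ ^ 2)
    calc (q₁ : ℤ) ^ 2 * x₁ ^ 2 = (n ^ 2 - x₂ * q₂) ^ 2 := by rw [hx₁]; ring
      _ ≤ (4 * (q₁ ^ 2 * (Hfun q₁ * q₂)) : ℤ) :=
          sq_sub_le_four_mul_of_sq_le (sq_nonneg n) hx₂q hA hB
      _ = (q₁ ^ 2 * (4 * Hfun q₁ * q₂) : ℤ) := by ring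
  · have hx₂sq : x₂ ^ 2 ≤ (Hfun q₁ * M ^ 2) ^ 2 := by
      rw [← sq_abs]; exact pow_le_pow_left₀ (abs_nonneg x₂) hx₂ 2
    calc x₂ ^ 2 * q₂ ≤ (Hfun q₁ * M ^ 2) ^ 2 * q₂ :=
          mul_le_mul_of_nonneg_right hx₂sq (by positivity)
      _ = Hfun q₁ * (M ^ 4 * (Hfun q₁ * q₂)) := by ring
      _ ≤ Hfun q₁ * q₁ ^ 2 := mul_le_mul_of_nonneg_left hlow (by positivity)

theorem exists_sq_eq_mul_add_mul {q₁ q₂ : ℕ} (hq₁ : 0 < q₁) (hq₂ : 0 < q₂)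
    (hcop : q₁.Coprime q₂) :
    ∃ x₁ x₂ n : ℤ, n ≠ 0 ∧ x₁ * q₁ + x₂ * q₂ = n ^ 2 ∧
      x₁ ^ 2 ≤ 4 * Hfun q₁ * q₂ ∧ x₂ ^ 2 * q₂ ≤ Hfun q₁ * q₁ ^ 2 := by
  have hc : 0 < Hfun q₁ * q₂ := Nat.mul_pos (Hfun_spec hq₁).1 hq₂
  by_cases hsmall : q₁ ^ 2 ≤ Hfun q₁ * q₂
  · refine ⟨q₁, 0, q₁, by positivity, by ring, ?_, by simp; positivity⟩
    have : (q₁ : ℤ) ^ 2 ≤ Hfun q₁ * q₂ := by exact_mod_cast hsmall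
    linarith
  obtain ⟨M, hlow, hhigh⟩ := exists_pow_mul_le_lt (k := 4) (by norm_num) hc (q₁ ^ 2)
  have hM : 0 < M := by
    rcases Nat.eq_zero_or_pos M with rfl | hM
    · simp at hhigh; omega
    · exact hM
  have hMq : M < q₁ := by
    have hM2 : M ^ 2 ≤ q₁ := (Nat.pow_le_pow_iff_left two_ne_zero).1 <| by
      rw [← pow_mul]; exact (Nat.le_mul_of_pos_right _ hc).trans hlow
    nlinarith
  exact exists_sq_eq_mul_add_mul_of_pow_mul_le_lt hcop hM hMq (by exact_mod_cast hlow)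
    (by exact_mod_cast hhigh)

theorem setOf_abs_intCast_le_eq_Icc (X : ℝ) :
    {x : ℤ | |(x : ℝ)| ≤ X} = Set.Icc (-⌊X⌋) ⌊X⌋ := by
  ext x
  simp only [Set.mem_ofPred_eq, Set.mem_Icc, ← Int.cast_abs, ← Int.le_floor, abs_le]

theorem ncard_setOf_abs_intCast_le {X : ℝ} (hX : 0 ≤ X) :
    ({x : ℤ | |(x : ℝ)| ≤ X}.ncard : ℝ) ≤ 2 * X + 1 := by
  have hfloor : (0 : ℤ) ≤ ⌊X⌋ := Int.floor_nonneg.2 hX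
  rw [setOf_abs_intCast_le_eq_Icc, ← Finset.coe_Icc, Set.ncard_coe_finset, Int.card_Icc,
    show ⌊X⌋ + 1 - -⌊X⌋ = 2 * ⌊X⌋ + 1 by ring]
  have : (((2 * ⌊X⌋ + 1).toNat : ℤ) : ℝ) ≤ 2 * X + 1 := by
    rw [Int.toNat_of_nonneg (by omega)]
    push_cast
    linarith [Int.floor_le X]
  exact_mod_cast this

theorem ncard_progression_le (a b : ℤ) {X₁ X₂ : ℝ} (hX₁ : 0 ≤ X₁) (hX₂ : 0 ≤ X₂) :
    ({m : ℤ | ∃ x₁ x₂ : ℤ, |(x₁ : ℝ)| ≤ X₁ ∧ |(x₂ : ℝ)| ≤ X₂ ∧ m = x₁ * a + x₂ * b}.ncard : ℝ) ≤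
      (2 * X₁ + 1) * (2 * X₂ + 1) := by
  have himage : {m : ℤ | ∃ x₁ x₂ : ℤ, |(x₁ : ℝ)| ≤ X₁ ∧ |(x₂ : ℝ)| ≤ X₂ ∧ m = x₁ * a + x₂ * b} =
      (fun p : ℤ × ℤ => p.1 * a + p.2 * b) ''
        ({x : ℤ | |(x : ℝ)| ≤ X₁} ×ˢ {x : ℤ | |(x : ℝ)| ≤ X₂}) := by
    ext m
    simp [and_assoc, eq_comm]
  have hfin : ({x : ℤ | |(x : ℝ)| ≤ X₁} ×ˢ {x : ℤ | |(x : ℝ)| ≤ X₂}).Finite := by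
    simp only [setOf_abs_intCast_le_eq_Icc]
    exact (Set.finite_Icc _ _).prod (Set.finite_Icc _ _)
  calc _ ≤ (({x : ℤ | |(x : ℝ)| ≤ X₁} ×ˢ {x : ℤ | |(x : ℝ)| ≤ X₂}).ncard : ℝ) := by
        rw [himage]; exact_mod_cast Set.ncard_image_le hfin
    _ = ({x : ℤ | |(x : ℝ)| ≤ X₁}.ncard : ℝ) * {x : ℤ | |(x : ℝ)| ≤ X₂}.ncard := by
        rw [Set.ncard_prod, Nat.cast_mul]
    _ ≤ (2 * X₁ + 1) * (2 * X₂ + 1) :=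
        mul_le_mul (ncard_setOf_abs_intCast_le hX₁) (ncard_setOf_abs_intCast_le hX₂)
          (by positivity) (by positivity)

theorem mul_abs_le_two_mul_of_forall_abs_le {X T : ℝ} {a : ℤ} (hX : 1 ≤ X)
    (h : ∀ x : ℤ, |(x : ℝ)| ≤ X → |(x : ℝ) * a| ≤ T) : X * |(a : ℝ)| ≤ 2 * T := by
  have hfloor : (1 : ℝ) ≤ ⌊X⌋ := by exact_mod_cast Int.le_floor.2 (by exact_mod_cast hX)
  have hbound := h ⌊X⌋ (by rw [abs_of_pos (by linarith)]; exact Int.floor_le X)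
  rw [abs_mul, abs_of_pos (by linarith : (0 : ℝ) < ⌊X⌋)] at hbound
  nlinarith [Int.lt_floor_add_one X, abs_nonneg (a : ℝ)]

theorem mul_mul_sqrt_le_of_lt_abs_or_lt_abs {X₁ X₂ T H a b x₁ x₂ : ℝ} (hX₁ : 0 ≤ X₁)
    (hX₂ : 0 ≤ X₂) (ha : 0 ≤ a) (hb : 0 ≤ b) (hH : 0 ≤ H) (hT₁ : X₁ * a ≤ 2 * T)
    (hT₂ : X₂ * b ≤ 2 * T) (hx₁ : x₁ ^ 2 ≤ 4 * H * b) (hx₂ : x₂ ^ 2 * b ≤ H * a ^ 2)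
    (hout : X₁ < |x₁| ∨ X₂ < |x₂|) : X₁ * X₂ * √b ≤ 4 * √H * T := by
  have hT : 0 ≤ T := by nlinarith
  have hsq : (X₁ * X₂) ^ 2 * b ≤ 16 * H * T ^ 2 := by
    rcases hout with h | h
    · have hX₁sq : X₁ ^ 2 ≤ 4 * H * b := by
        refine le_trans ?_ hx₁
        rw [← sq_abs x₁]
        gcongr
      calc (X₁ * X₂) ^ 2 * b = X₁ ^ 2 * (X₂ ^ 2 * b) := by ring
        _ ≤ (4 * H * b) * (X₂ ^ 2 * b) := by gcongr
        _ = 4 * H * (X₂ * b) ^ 2 := by ring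
        _ ≤ 4 * H * (2 * T) ^ 2 := by gcongr
        _ = 16 * H * T ^ 2 := by ring
    · have hX₂sq : X₂ ^ 2 * b ≤ H * a ^ 2 := by
        refine le_trans ?_ hx₂
        rw [← sq_abs x₂]
        gcongr
      calc (X₁ * X₂) ^ 2 * b = X₁ ^ 2 * (X₂ ^ 2 * b) := by ring
        _ ≤ X₁ ^ 2 * (H * a ^ 2) := by gcongr
        _ = H * (X₁ * a) ^ 2 := by ring
        _ ≤ H * (2 * T) ^ 2 := by gcongr
        _ ≤ 16 * H * T ^ 2 := by nlinarith [sq_nonneg T]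
  refine (pow_le_pow_iff_left₀ (by positivity) (by positivity) two_ne_zero).1 ?_
  calc (X₁ * X₂ * √b) ^ 2 = (X₁ * X₂) ^ 2 * b := by rw [mul_pow, Real.sq_sqrt hb]
    _ ≤ 16 * H * T ^ 2 := hsq
    _ = (4 * √H * T) ^ 2 := by rw [mul_pow, mul_pow, Real.sq_sqrt hH]; ring

theorem ncard_progression_le_of_forall_ne_sq {q₁ q₂ : ℕ} {X₁ X₂ T : ℝ} (hq₁ : 0 < q₁)
    (hq₂ : 0 < q₂) (hcop : q₁.Coprime q₂) (hX₁ : 1 ≤ X₁) (hX₂ : 1 ≤ X₂)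
    (hbox : ∀ x₁ x₂ : ℤ, |(x₁ : ℝ)| ≤ X₁ → |(x₂ : ℝ)| ≤ X₂ →
      |((x₁ * q₁ + x₂ * q₂ : ℤ) : ℝ)| ≤ T)
    (hsq : ∀ x₁ x₂ : ℤ, |(x₁ : ℝ)| ≤ X₁ → |(x₂ : ℝ)| ≤ X₂ →
      ∀ n : ℤ, n ≠ 0 → x₁ * (q₁ : ℤ) + x₂ * (q₂ : ℤ) ≠ n ^ 2) :
    ({m : ℤ | ∃ x₁ x₂ : ℤ, |(x₁ : ℝ)| ≤ X₁ ∧ |(x₂ : ℝ)| ≤ X₂ ∧ m = x₁ * q₁ + x₂ * q₂}.ncard : ℝ) ≤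
      36 * √(Hfun q₁) * T / √q₂ := by
  obtain ⟨x₁, x₂, n, hn, hsum, hx₁, hx₂⟩ := exists_sq_eq_mul_add_mul hq₁ hq₂ hcop
  have hT₁ : X₁ * q₁ ≤ 2 * T := by
    simpa using mul_abs_le_two_mul_of_forall_abs_le hX₁ (a := q₁) fun x hx => by
      simpa using hbox x 0 hx (by simp; linarith)
  have hT₂ : X₂ * q₂ ≤ 2 * T := by
    simpa using mul_abs_le_two_mul_of_forall_abs_le hX₂ (a := q₂) fun x hx => by
      simpa using hbox 0 x (by simp; linarith) hx
  have hout : X₁ < |(x₁ : ℝ)| ∨ X₂ < |(x₂ : ℝ)| := by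
    by_contra! h
    exact hsq x₁ x₂ h.1 h.2 n hn hsum
  have hx₁' : (x₁ : ℝ) ^ 2 ≤ 4 * (Hfun q₁ : ℝ) * q₂ := by exact_mod_cast hx₁
  have hx₂' : (x₂ : ℝ) ^ 2 * q₂ ≤ (Hfun q₁ : ℝ) * q₁ ^ 2 := by exact_mod_cast hx₂
  have hcard := ncard_progression_le q₁ q₂ (by linarith : 0 ≤ X₁) (by linarith : 0 ≤ X₂)
  rw [le_div_iff₀ (Real.sqrt_pos.2 (by exact_mod_cast hq₂))]
  calc _ ≤ 9 * (X₁ * X₂ * √q₂) := by rw [← mul_assoc, ← mul_assoc]; gcongr; nlinarith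
    _ ≤ 9 * (4 * √(Hfun q₁) * T) := by
      refine mul_le_mul_of_nonneg_left ?_ (by norm_num)
      exact mul_mul_sqrt_le_of_lt_abs_or_lt_abs (by linarith) (by linarith) (Nat.cast_nonneg _)
        (Nat.cast_nonneg _) (Nat.cast_nonneg _) hT₁ hT₂ hx₁' hx₂' hout
    _ = 36 * √(Hfun q₁) * T := by ring

/-- Under the Zaharescu-type bound `H(q₁) ≤ C_ε·q₁^(1/4+ε)`, a coprime
progression in `[-T,T]` avoiding non-zero squares satisfies
`|A| ≤ C'·q₁^(1/8+ε)·T/q₂^(1/2)`. -/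
theorem card_bound_via_H (ε : ℝ) (hε : 0 < ε) (Cε : ℝ) (hCε : 0 < Cε) :
    ∃ C' : ℝ, 0 < C' ∧ ∀ (q₁ q₂ : ℕ) (X₁ X₂ T : ℝ), 0 < q₁ → 0 < q₂ → q₁ ≤ q₂ →
      Nat.Coprime q₁ q₂ → 1 ≤ X₁ → 1 ≤ X₂ → 0 < T →
      (∀ x₁ x₂ : ℤ, |(x₁ : ℝ)| ≤ X₁ → |(x₂ : ℝ)| ≤ X₂ →
        |((x₁ * q₁ + x₂ * q₂ : ℤ) : ℝ)| ≤ T) →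
      (∀ x₁ x₂ : ℤ, |(x₁ : ℝ)| ≤ X₁ → |(x₂ : ℝ)| ≤ X₂ →
        ∀ n : ℤ, n ≠ 0 → x₁ * (q₁ : ℤ) + x₂ * (q₂ : ℤ) ≠ n ^ 2) →
      (Hfun q₁ : ℝ) ≤ Cε * (q₁ : ℝ) ^ ((1 : ℝ) / 4 + ε) →
      (({m : ℤ | ∃ x₁ x₂ : ℤ, |(x₁ : ℝ)| ≤ X₁ ∧ |(x₂ : ℝ)| ≤ X₂ ∧
          m = x₁ * q₁ + x₂ * q₂}.ncard : ℝ)) ≤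
        C' * (q₁ : ℝ) ^ ((1 : ℝ) / 8 + ε) * T / (q₂ : ℝ) ^ ((1 : ℝ) / 2) := by
  refine ⟨36 * √Cε, by positivity, fun q₁ q₂ X₁ X₂ T hq₁ hq₂ _ hcop hX₁ hX₂ hT hbox hsq hH => ?_⟩
  have hq₁' : (1 : ℝ) ≤ q₁ := by exact_mod_cast hq₁
  have hsqrtH : √(Hfun q₁) ≤ √Cε * (q₁ : ℝ) ^ ((1 : ℝ) / 8 + ε) := by
    calc √(Hfun q₁) ≤ √(Cε * (q₁ : ℝ) ^ ((1 : ℝ) / 4 + ε)) := Real.sqrt_le_sqrt hH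
      _ = √Cε * (q₁ : ℝ) ^ ((1 : ℝ) / 8 + ε / 2) := by
        rw [Real.sqrt_mul hCε.le, Real.sqrt_eq_rpow ((q₁ : ℝ) ^ _), ← Real.rpow_mul (by positivity)]
        ring_nf
      _ ≤ √Cε * (q₁ : ℝ) ^ ((1 : ℝ) / 8 + ε) := by
        gcongr
        linarith
  calc _ ≤ 36 * √(Hfun q₁) * T / √q₂ :=
        ncard_progression_le_of_forall_ne_sq hq₁ hq₂ hcop hX₁ hX₂ hbox hsq
    _ ≤ 36 * √Cε * (q₁ : ℝ) ^ ((1 : ℝ) / 8 + ε) * T / (q₂ : ℝ) ^ ((1 : ℝ) / 2) := by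
      rw [← Real.sqrt_eq_rpow, mul_assoc 36 √Cε]
      gcongr
end
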